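/- arXiv:2409.19061 — 5 statements merged into one kernel-verified Lean document; each statement's English description precedes it below -/
import Mathlib

section
/- For every active morphism α : [n] → [m] and every inert morphism ι : [n] → [k] in the simplex category Δ, there is a pushout square in Δ with legs α and ι whose remaining two maps are an inert morphism θ : [m] → [p] and an active morphism φ : [k] → [p] satisfying θ ∘ α = φ ∘ ι, where p = k − n + m. -/
open CategoryTheory Simplicial

universe u

/-- A morphism in the simplex category is *active* if it preserves endpoints. -/
def IsActive {n m : SimplexCategory} (α : n ⟶ m) : Prop :=
  α.toOrderHom 0 = 0 ∧ α.toOrderHom (Fin.last n.len) = Fin.last m.len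

/-- A morphism in the simplex category is *inert* if it is distance preserving. -/
def IsInert {n m : SimplexCategory} (α : n ⟶ m) : Prop :=
  ∀ i : Fin n.len, (α.toOrderHom i.succ : ℕ) = (α.toOrderHom i.castSucc : ℕ) + 1

/-!
An inert `ι : [n] → [k]` is the inclusion of a window `[a, n + a]` of `[k]`. The pushout along an
active `α : [n] → [m]` replaces this window by `[m]`: in `[p]`, `p = k - n + m`, the leg `θ` is the
inclusion of the window `[a, m + a]`, and `φ` is the identity below `a`, `α` on the window, and the
shift by `m - n` above it. The legs `θ` and `φ` are jointly surjective, which gives uniqueness.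
A cocone `(f, g)` induces the map that is `f` on the window `[a, m + a]` and `g` (suitably shifted)
off it; it is monotone because, `α` being active, `f` and `g` agree at the two ends of the window.
-/

open CategoryTheory.Limits

namespace SimplexCategory

def homOfMonotone {x y : SimplexCategory} (f : ℕ → ℕ) (hf : Monotone f) (hb : f x.len ≤ y.len) :
    x ⟶ y :=
  mkHom ⟨fun i => ⟨f i, Nat.lt_succ_of_le ((hf (Fin.is_le i)).trans hb)⟩, fun _ _ h => hf h⟩

lemma Hom.ext_val {x y : SimplexCategory} {f g : x ⟶ y}
    (h : ∀ i, (f.toOrderHom i : ℕ) = g.toOrderHom i) : f = g :=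
  Hom.ext _ _ (OrderHom.ext _ _ (funext fun i => Fin.ext (h i)))

/-- `f` read as a map `ℕ → ℕ`, constant to the right of `x.len`. -/
def Hom.extend {x y : SimplexCategory} (f : x ⟶ y) (j : ℕ) : ℕ :=
  f.toOrderHom ⟨min j x.len, Nat.lt_succ_of_le (min_le_right _ _)⟩

section Extend

variable {x y : SimplexCategory} (f : x ⟶ y)

lemma Hom.monotone_extend : Monotone f.extend :=
  fun _ _ hij => f.toOrderHom.monotone (Fin.mk_le_mk.mpr (min_le_min_right _ hij))

lemma Hom.extend_le_len (j : ℕ) : f.extend j ≤ y.len :=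
  Fin.is_le _

lemma Hom.extend_val (i : Fin (x.len + 1)) : f.extend i = f.toOrderHom i := by
  simp only [extend, min_eq_left (Fin.is_le i)]

lemma Hom.extend_of_len_le {j : ℕ} (hj : x.len ≤ j) :
    f.extend j = f.toOrderHom (Fin.last x.len) := by
  simp only [extend, min_eq_right hj, Fin.last]

end Extend

end SimplexCategory

open SimplexCategory

lemma IsActive.extend_zero {n m : SimplexCategory} {α : n ⟶ m} (hα : IsActive α) :
    α.extend 0 = 0 := by
  have := α.extend_val 0
  rwa [hα.1, Fin.val_zero, Fin.val_zero] at this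

lemma IsActive.extend_of_len_le {n m : SimplexCategory} {α : n ⟶ m} (hα : IsActive α) {j : ℕ}
    (hj : n.len ≤ j) : α.extend j = m.len := by
  rw [α.extend_of_len_le hj, hα.2, Fin.val_last]

section Inert

variable {n k : SimplexCategory} {ι : n ⟶ k}

lemma IsInert.val_apply (hι : IsInert ι) (i : Fin (n.len + 1)) :
    (ι.toOrderHom i : ℕ) = i + ι.toOrderHom 0 := by
  induction i using Fin.induction with
  | zero => simp
  | succ i ih => rw [hι i, ih, Fin.val_succ, Fin.val_castSucc]; omega

lemma IsInert.val_zero_add_len_le (hι : IsInert ι) : (ι.toOrderHom 0 : ℕ) + n.len ≤ k.len := by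
  have := hι.val_apply (Fin.last n.len)
  have := (ι.toOrderHom (Fin.last n.len)).is_le
  simp only [Fin.val_last] at *
  omega

lemma IsInert.eq_subinterval (hι : IsInert ι) :
    ι = subinterval (ι.toOrderHom 0) n.len hι.val_zero_add_len_le :=
  Hom.ext_val hι.val_apply

end Inert

namespace SimplexCategory

lemma isInert_subinterval {l p : ℕ} (a : ℕ) (h : a + l ≤ p) : IsInert (subinterval a l h) :=
  fun i => show (i.succ : ℕ) + a = (i.castSucc : ℕ) + a + 1 by
    rw [Fin.val_succ, Fin.val_castSucc]; omega

/-- `h` on `[0, a)`, then `g` on the window `[a, m + a]` (shifted to start at `0`), then `h`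
again, with its window `[a, n + a]` collapsed onto the window `[a, m + a]`. -/
def splice (a m n : ℕ) (g h : ℕ → ℕ) (x : ℕ) : ℕ :=
  if x < a then h x else if x ≤ m + a then g (x - a) else h (x - m + n)

section Splice

variable {a m n : ℕ} {g h : ℕ → ℕ}

lemma splice_of_lt {x : ℕ} (hx : x < a) : splice a m n g h x = h x :=
  if_pos hx

lemma splice_of_mem {x : ℕ} (hax : a ≤ x) (hxm : x ≤ m + a) :
    splice a m n g h x = g (x - a) := by
  rw [splice, if_neg (by omega), if_pos hxm]

lemma splice_of_gt {x : ℕ} (hx : m + a < x) : splice a m n g h x = h (x - m + n) := by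
  rw [splice, if_neg (by omega), if_neg (by omega)]

lemma splice_le {q : ℕ} (hg : ∀ x, g x ≤ q) (hh : ∀ x, h x ≤ q) (x : ℕ) :
    splice a m n g h x ≤ q := by
  unfold splice
  split_ifs <;> simp only [hg, hh]

lemma monotone_splice (hg : Monotone g) (hh : Monotone h) (h₀ : g 0 = h a)
    (h₁ : g m = h (n + a)) : Monotone (splice a m n g h) := by
  intro x y hxy
  unfold splice
  split_ifs
  all_goals first
    | exact hh (by omega)
    | exact hg (by omega)
    | exact (hh (by omega)).trans (h₀.symm.le.trans (hg (Nat.zero_le _)))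
    | exact (hg (by omega)).trans (h₁.le.trans (hh (by omega)))

end Splice

section Pushout

variable {n m k : SimplexCategory} {a : ℕ}

def pushoutInl (m : SimplexCategory) (ha : a + n.len ≤ k.len) : m ⟶ mk (k.len - n.len + m.len) :=
  subinterval a m.len (by omega)

def pushoutInr (α : n ⟶ m) (ha : a + n.len ≤ k.len) : k ⟶ mk (k.len - n.len + m.len) :=
  homOfMonotone (fun i => min i a + α.extend (i - a) + (i - (n.len + a)))
    (fun i j hij => by
      have := α.monotone_extend (Nat.sub_le_sub_right hij a)
      dsimp only
      omega)
    (by have := α.extend_le_len (k.len - a); show _ ≤ k.len - n.len + m.len; omega)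

lemma pushoutInl_val (m : SimplexCategory) (ha : a + n.len ≤ k.len) (j : Fin (m.len + 1)) :
    ((pushoutInl m ha).toOrderHom j : ℕ) = j + a :=
  rfl

lemma pushoutInr_val (α : n ⟶ m) (ha : a + n.len ≤ k.len) (i : Fin (k.len + 1)) :
    ((pushoutInr α ha).toOrderHom i : ℕ) = min (i : ℕ) a + α.extend (i - a) + (i - (n.len + a)) :=
  rfl

variable {α : n ⟶ m} (ha : a + n.len ≤ k.len)

lemma pushoutInr_val_of_le (hα : IsActive α) {i : Fin (k.len + 1)} (hi : (i : ℕ) ≤ a) :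
    ((pushoutInr α ha).toOrderHom i : ℕ) = i := by
  have : α.extend (i - a) = 0 := by rw [Nat.sub_eq_zero_of_le hi, hα.extend_zero]
  rw [pushoutInr_val, this]
  omega

lemma pushoutInr_val_of_mem {i : Fin (k.len + 1)} (hai : a ≤ i) (hin : (i : ℕ) ≤ n.len + a) :
    ((pushoutInr α ha).toOrderHom i : ℕ) = α.extend (i - a) + a := by
  rw [pushoutInr_val]
  omega

lemma pushoutInr_val_of_ge (hα : IsActive α) {i : Fin (k.len + 1)} (hi : n.len + a ≤ i) :
    ((pushoutInr α ha).toOrderHom i : ℕ) = i - n.len + m.len := by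
  have : α.extend (i - a) = m.len := hα.extend_of_len_le (by omega)
  rw [pushoutInr_val, this]
  omega

lemma isActive_pushoutInr (hα : IsActive α) : IsActive (pushoutInr α ha) := by
  constructor
  · exact Fin.ext (pushoutInr_val_of_le ha hα (Nat.zero_le a))
  · exact Fin.ext (pushoutInr_val_of_ge ha hα (by simp only [Fin.val_last]; omega))

lemma pushout_condition :
    α ≫ pushoutInl m ha = (subinterval a n.len ha : n ⟶ k) ≫ pushoutInr α ha :=
  Hom.ext_val fun i => by
    have := i.is_le
    change _ = ((pushoutInr α ha).toOrderHom ⟨i + a, _⟩ : ℕ)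
    rw [pushoutInr_val_of_mem ha (by simp) (by simp; omega)]
    simp [pushoutInl_val, Hom.extend_val]

lemma pushout_jointly_surjective (hα : IsActive α) (x : Fin (k.len - n.len + m.len + 1)) :
    (∃ j, (pushoutInl m ha).toOrderHom j = x) ∨ ∃ i, (pushoutInr α ha).toOrderHom i = x := by
  have hx := x.is_le
  by_cases hxa : (x : ℕ) < a
  · exact .inr ⟨⟨x, by omega⟩, Fin.ext (pushoutInr_val_of_le ha hα hxa.le)⟩
  by_cases hxm : (x : ℕ) ≤ m.len + a
  · exact .inl ⟨⟨x - a, by omega⟩, Fin.ext (by rw [pushoutInl_val]; dsimp only; omega)⟩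
  · refine .inr ⟨⟨x - m.len + n.len, by omega⟩, Fin.ext ?_⟩
    rw [pushoutInr_val_of_ge ha hα (by dsimp only; omega)]
    dsimp only
    omega

lemma pushout_hom_ext (hα : IsActive α) {z : SimplexCategory}
    {u v : mk (k.len - n.len + m.len) ⟶ z}
    (h₁ : pushoutInl m ha ≫ u = pushoutInl m ha ≫ v)
    (h₂ : pushoutInr α ha ≫ u = pushoutInr α ha ≫ v) : u = v :=
  Hom.ext_val fun x => by
    rcases pushout_jointly_surjective ha hα x with ⟨j, rfl⟩ | ⟨i, rfl⟩
    · exact congrArg Fin.val (congr_toOrderHom_apply h₁ j)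
    · exact congrArg Fin.val (congr_toOrderHom_apply h₂ i)

lemma extend_extend_eq_of_condition {z : SimplexCategory} {f : m ⟶ z} {g : k ⟶ z}
    (w : α ≫ f = (subinterval a n.len ha : n ⟶ k) ≫ g) (j : Fin (n.len + 1)) :
    f.extend (α.extend j) = g.extend (j + a) := by
  rw [α.extend_val, f.extend_val]
  exact (congrArg Fin.val (congr_toOrderHom_apply w j)).trans (g.extend_val ⟨j + a, _⟩).symm

def pushoutDesc (hα : IsActive α) {z : SimplexCategory} (f : m ⟶ z) (g : k ⟶ z)
    (w : α ≫ f = (subinterval a n.len ha : n ⟶ k) ≫ g) : mk (k.len - n.len + m.len) ⟶ z :=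
  homOfMonotone (splice a m.len n.len f.extend g.extend)
    (monotone_splice f.monotone_extend g.monotone_extend
      (by simpa [hα.extend_zero] using extend_extend_eq_of_condition ha w 0)
      (by simpa [hα.extend_of_len_le le_rfl] using extend_extend_eq_of_condition ha w (Fin.last _)))
    (splice_le f.extend_le_len g.extend_le_len _)

section Desc

variable (hα : IsActive α) {z : SimplexCategory} {f : m ⟶ z} {g : k ⟶ z}
  (w : α ≫ f = (subinterval a n.len ha : n ⟶ k) ≫ g)

lemma pushoutInl_desc : pushoutInl m ha ≫ pushoutDesc ha hα f g w = f :=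
  Hom.ext_val fun j => by
    change splice a m.len n.len f.extend g.extend (j + a) = _
    rw [splice_of_mem (by omega) (by omega), Nat.add_sub_cancel, f.extend_val]

lemma pushoutInr_desc : pushoutInr α ha ≫ pushoutDesc ha hα f g w = g :=
  Hom.ext_val fun i => by
    change splice a m.len n.len f.extend g.extend ((pushoutInr α ha).toOrderHom i) = _
    rw [← g.extend_val]
    by_cases hia : (i : ℕ) < a
    · rw [pushoutInr_val_of_le ha hα hia.le, splice_of_lt hia]
    by_cases hin : (i : ℕ) ≤ n.len + a
    · have hα_le := α.extend_le_len (i - a)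
      have key := extend_extend_eq_of_condition ha w ⟨i - a, by omega⟩
      rw [Fin.val_mk, Nat.sub_add_cancel (not_lt.mp hia)] at key
      rw [pushoutInr_val_of_mem ha (by omega) hin, splice_of_mem (by omega) (by omega),
        Nat.add_sub_cancel, key]
    · rw [pushoutInr_val_of_ge ha hα (by omega), splice_of_gt (by omega)]
      congr 1
      omega

end Desc

theorem isPushout_pushoutInl_pushoutInr (hα : IsActive α) :
    IsPushout α (subinterval a n.len ha : n ⟶ k) (pushoutInl m ha) (pushoutInr α ha) :=
  .of_isColimit <| PushoutCocone.IsColimit.mk (pushout_condition ha)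
    (fun s => pushoutDesc ha hα s.inl s.inr s.condition)
    (fun s => pushoutInl_desc ha hα s.condition) (fun s => pushoutInr_desc ha hα s.condition)
    (fun s _ h₁ h₂ => pushout_hom_ext ha hα
      (h₁.trans (pushoutInl_desc ha hα s.condition).symm)
      (h₂.trans (pushoutInr_desc ha hα s.condition).symm))

end Pushout

end SimplexCategory

/-- Active-inert pushouts exist in the simplex category: for every active `α : [n] → [m]`
and inert `ι : [n] → [k]` there is a pushout square with remaining legs an inert
`θ : [m] → [p]` and an active `φ : [k] → [p]`, where `p = k - n + m`. -/
theorem active_inert_pushout ⦃n m k : SimplexCategory⦄ (α : n ⟶ m) (ι : n ⟶ k)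
    (hα : IsActive α) (hι : IsInert ι) :
    ∃ (θ : m ⟶ SimplexCategory.mk (k.len - n.len + m.len))
      (φ : k ⟶ SimplexCategory.mk (k.len - n.len + m.len)),
      IsInert θ ∧ IsActive φ ∧ α ≫ θ = ι ≫ φ ∧ IsPushout α ι θ φ := by
  have ha := hι.val_zero_add_len_le
  rw [hι.eq_subinterval]
  exact ⟨pushoutInl m ha, pushoutInr α ha, isInert_subinterval _ _, isActive_pushoutInr ha hα,
    pushout_condition ha, isPushout_pushoutInl_pushoutInr ha hα⟩
end

section
/- Every pushout square in the simplex category Δ of an active morphism α : [n] → [m] along an inert morphism ι : [n] → [k], with pushout corner maps an inert θ : [m] → [p] and an active φ : [k] → [p], is also a pullback square in Δ. -/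
open CategoryTheory Simplicial

universe u

namespace ActiveInertAux

open SimplexCategory Limits

lemma inert_val {n m : SimplexCategory} (f : n ⟶ m) (hf : IsInert f)
    (i : Fin (n.len + 1)) :
    (f.toOrderHom i : ℕ) = (f.toOrderHom 0 : ℕ) + (i : ℕ) := by
  induction i using Fin.induction with
  | zero => simp
  | succ i ih =>
      have := hf i
      simp only [Fin.val_succ, Fin.coe_castSucc] at this ih ⊢
      omega

/-- The "indicator" morphism to `[1]` that is `0` below `c` and `1` from `c` on. -/
def step (a : SimplexCategory) (c : ℕ) : a ⟶ SimplexCategory.mk 1 :=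
  SimplexCategory.Hom.mk
    ⟨fun i => if (i : ℕ) < c then 0 else 1, by
      intro x y hxy
      dsimp only
      split_ifs with h1 h2 h2
      · exact le_refl _
      · exact Fin.zero_le _
      · exact absurd (lt_of_le_of_lt (Fin.le_def.mp hxy) h2) h1
      · exact le_refl _⟩

lemma step_apply (a : SimplexCategory) (c : ℕ) (i : Fin (a.len + 1)) :
    (step a c).toOrderHom i = if (i : ℕ) < c then 0 else 1 := rfl

/-- The constant morphism to `[1]`. -/
def cst (a : SimplexCategory) (v : Fin 2) : a ⟶ SimplexCategory.mk 1 :=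
  SimplexCategory.Hom.mk ⟨fun _ => v, fun _ _ _ => le_refl _⟩

lemma cst_apply (a : SimplexCategory) (v : Fin 2) (i : Fin (a.len + 1)) :
    (cst a v).toOrderHom i = v := rfl

end ActiveInertAux

open ActiveInertAux CategoryTheory.Limits in
/-- Every pushout square in the simplex category of an active map `α` along an inert map `ι`,
with pushout corner maps an inert `θ` and an active `φ`, is also a pullback square. -/
theorem active_inert_pushout_isPullback ⦃n m k p : SimplexCategory⦄
    (α : n ⟶ m) (ι : n ⟶ k) (θ : m ⟶ p) (φ : k ⟶ p)
    (hα : IsActive α) (hι : IsInert ι) (hθ : IsInert θ) (hφ : IsActive φ)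
    (h : IsPushout α ι θ φ) : IsPullback α ι θ φ := by
  classical
  set c : ℕ := (ι.toOrderHom 0 : ℕ) with hc
  set d : ℕ := (θ.toOrderHom 0 : ℕ) with hd
  have hιval : ∀ i, (ι.toOrderHom i : ℕ) = c + (i : ℕ) := inert_val ι hι
  have hθval : ∀ j, (θ.toOrderHom j : ℕ) = d + (j : ℕ) := inert_val θ hθ
  have hcomm : ∀ y, (θ.toOrderHom (α.toOrderHom y) : ℕ)
      = (φ.toOrderHom (ι.toOrderHom y) : ℕ) := by
    intro y
    have := congrArg (fun f => (SimplexCategory.Hom.toOrderHom f y : ℕ)) h.w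
    simpa [SimplexCategory.comp_toOrderHom] using this
  -- φ (ι 0) has value d
  have hφι0 : (φ.toOrderHom (ι.toOrderHom 0) : ℕ) = d := by
    rw [← hcomm 0, hα.1, hθval]; simp
  -- φ (ι last) has value d + m.len
  have hφιlast : (φ.toOrderHom (ι.toOrderHom (Fin.last n.len)) : ℕ) = d + m.len := by
    rw [← hcomm (Fin.last n.len), hα.2, hθval]
    simp [Fin.last]
  have hck : c + n.len ≤ k.len := by
    have := (ι.toOrderHom (Fin.last n.len)).isLt
    rw [hιval] at this
    simpa [Fin.last] using Nat.lt_succ_iff.mp this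
  -- Lemma A : values of φ below ι 0 are strictly below d
  have lemA : ∀ z : Fin (k.len + 1), (z : ℕ) < c → (φ.toOrderHom z : ℕ) < d := by
    intro z hz
    by_contra hge
    push_neg at hge
    have hle : (φ.toOrderHom z : ℕ) ≤ d := by
      have : z ≤ ι.toOrderHom 0 := by
        rw [Fin.le_def]; omega
      have := φ.toOrderHom.monotone this
      rw [Fin.le_def] at this; omega
    have heq : φ.toOrderHom z = φ.toOrderHom (ι.toOrderHom 0) := by
      apply Fin.ext; omega
    -- build maps to [1]
    have hw : α ≫ cst m 1 = ι ≫ step k c := by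
      apply SimplexCategory.Hom.ext'
      apply OrderHom.ext
      funext y
      show (cst m 1).toOrderHom (α.toOrderHom y) = (step k c).toOrderHom (ι.toOrderHom y)
      rw [cst_apply, step_apply, if_neg]
      rw [hιval]; omega
    set w0 := h.desc (cst m 1) (step k c) hw with hw0
    have h1 : φ ≫ w0 = step k c := h.inr_desc _ _ _
    have e1 : w0.toOrderHom (φ.toOrderHom z) = (0 : Fin 2) := by
      have := congrArg (fun f => SimplexCategory.Hom.toOrderHom f z) h1
      simp only [SimplexCategory.comp_toOrderHom, OrderHom.comp_coe,
        Function.comp_apply] at this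
      rw [this, step_apply, if_pos hz]
    have e2 : w0.toOrderHom (φ.toOrderHom (ι.toOrderHom 0)) = (1 : Fin 2) := by
      have := congrArg (fun f => SimplexCategory.Hom.toOrderHom f (ι.toOrderHom 0)) h1
      simp only [SimplexCategory.comp_toOrderHom, OrderHom.comp_coe,
        Function.comp_apply] at this
      rw [this, step_apply, if_neg]
      rw [hιval]; omega
    rw [heq, e2] at e1
    exact absurd e1 (by decide)
  -- Lemma B : values of φ above ι last are strictly above d + m.len
  have lemB : ∀ z : Fin (k.len + 1), c + n.len < (z : ℕ) →
      d + m.len < (φ.toOrderHom z : ℕ) := by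
    intro z hz
    by_contra hge
    push_neg at hge
    have hle : d + m.len ≤ (φ.toOrderHom z : ℕ) := by
      have : ι.toOrderHom (Fin.last n.len) ≤ z := by
        rw [Fin.le_def, hιval]; simpa [Fin.last] using le_of_lt hz
      have := φ.toOrderHom.monotone this
      rw [Fin.le_def] at this; omega
    have heq : φ.toOrderHom z = φ.toOrderHom (ι.toOrderHom (Fin.last n.len)) := by
      apply Fin.ext; omega
    have hw : α ≫ cst m 0 = ι ≫ step k (c + n.len + 1) := by
      apply SimplexCategory.Hom.ext'
      apply OrderHom.ext
      funext y
      show (cst m 0).toOrderHom (α.toOrderHom y)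
        = (step k (c + n.len + 1)).toOrderHom (ι.toOrderHom y)
      rw [cst_apply, step_apply, if_pos]
      rw [hιval]
      have := y.isLt
      omega
    set w0 := h.desc (cst m 0) (step k (c + n.len + 1)) hw with hw0
    have h1 : φ ≫ w0 = step k (c + n.len + 1) := h.inr_desc _ _ _
    have e1 : w0.toOrderHom (φ.toOrderHom z) = (1 : Fin 2) := by
      have := congrArg (fun f => SimplexCategory.Hom.toOrderHom f z) h1
      simp only [SimplexCategory.comp_toOrderHom, OrderHom.comp_coe,
        Function.comp_apply] at this
      rw [this, step_apply, if_neg]; omega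
    have e2 : w0.toOrderHom (φ.toOrderHom (ι.toOrderHom (Fin.last n.len))) = (0 : Fin 2) := by
      have := congrArg
        (fun f => SimplexCategory.Hom.toOrderHom f (ι.toOrderHom (Fin.last n.len))) h1
      simp only [SimplexCategory.comp_toOrderHom, OrderHom.comp_coe,
        Function.comp_apply] at this
      rw [this, step_apply, if_pos]
      rw [hιval]; simp [Fin.last]
    rw [heq, e2] at e1
    exact absurd e1 (by decide)
  -- Now build the pullback.
  refine ⟨⟨h.w⟩, ⟨?_⟩⟩
  -- key pointwise bounds for a cone
  have key : ∀ (W : SimplexCategory) (g1 : W ⟶ m) (g2 : W ⟶ k)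
      (hcond : g1 ≫ θ = g2 ≫ φ) (x : Fin (W.len + 1)),
      c ≤ (g2.toOrderHom x : ℕ) ∧ (g2.toOrderHom x : ℕ) ≤ c + n.len ∧
        (φ.toOrderHom (g2.toOrderHom x) : ℕ) = d + (g1.toOrderHom x : ℕ) := by
    intro W g1 g2 hcond x
    have hval : (φ.toOrderHom (g2.toOrderHom x) : ℕ) = d + (g1.toOrderHom x : ℕ) := by
      have := congrArg (fun f => (SimplexCategory.Hom.toOrderHom f x : ℕ)) hcond
      simp only [SimplexCategory.comp_toOrderHom, OrderHom.comp_coe,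
        Function.comp_apply] at this
      rw [← this, hθval]
    refine ⟨?_, ?_, hval⟩
    · by_contra hlt
      push_neg at hlt
      have := lemA _ hlt
      omega
    · by_contra hlt
      push_neg at hlt
      have := lemB _ hlt
      have hb := (g1.toOrderHom x).isLt
      omega
  -- the lift
  have hbound : ∀ (s : PullbackCone θ φ) (x : Fin (s.pt.len + 1)),
      ((s.snd.toOrderHom x : ℕ) - c) < n.len + 1 := by
    intro s x
    have := (key s.pt s.fst s.snd s.condition x).2.1
    omega
  let lft : ∀ s : PullbackCone θ φ, s.pt ⟶ n := fun s =>
    SimplexCategory.Hom.mk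
      ⟨fun x => ⟨(s.snd.toOrderHom x : ℕ) - c, hbound s x⟩, by
        intro x y hxy
        have := s.snd.toOrderHom.monotone hxy
        rw [Fin.le_def] at this
        simp only [Fin.mk_le_mk]
        omega⟩
  have lft_val : ∀ (s : PullbackCone θ φ) (x : Fin (s.pt.len + 1)),
      (((lft s).toOrderHom x : ℕ)) = (s.snd.toOrderHom x : ℕ) - c := fun _ _ => rfl
  refine PullbackCone.IsLimit.mk h.w lft ?_ ?_ ?_
  · -- fac_left : lft s ≫ α = s.fst
    intro s
    apply SimplexCategory.Hom.ext'
    apply OrderHom.ext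
    funext x
    obtain ⟨h1, h2, h3⟩ := key s.pt s.fst s.snd s.condition x
    simp only [SimplexCategory.comp_toOrderHom, OrderHom.comp_coe, Function.comp_apply]
    set y := (lft s).toOrderHom x with hy
    have hyval : (y : ℕ) = (s.snd.toOrderHom x : ℕ) - c := lft_val s x
    have hιy : ι.toOrderHom y = s.snd.toOrderHom x := by
      apply Fin.ext
      rw [hιval, hyval]
      omega
    have hkey := hcomm y
    rw [hιy, hθval, h3] at hkey
    apply Fin.ext
    omega
  · -- fac_right : lft s ≫ ι = s.snd
    intro s
    apply SimplexCategory.Hom.ext'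
    apply OrderHom.ext
    funext x
    obtain ⟨h1, h2, h3⟩ := key s.pt s.fst s.snd s.condition x
    simp only [SimplexCategory.comp_toOrderHom, OrderHom.comp_coe, Function.comp_apply]
    have hyval : (((lft s).toOrderHom x : ℕ)) = (s.snd.toOrderHom x : ℕ) - c := lft_val s x
    apply Fin.ext
    rw [hιval, hyval]
    omega
  · -- uniqueness
    intro s l hl1 hl2
    apply SimplexCategory.Hom.ext'
    apply OrderHom.ext
    funext x
    have hv := congrArg (fun f => (SimplexCategory.Hom.toOrderHom f x : ℕ)) hl2
    simp only [SimplexCategory.comp_toOrderHom, OrderHom.comp_coe,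
      Function.comp_apply] at hv
    rw [hιval] at hv
    have hyval : (((lft s).toOrderHom x : ℕ)) = (s.snd.toOrderHom x : ℕ) - c := lft_val s x
    apply Fin.ext
    omega
end

section
/- A simplicial set X is upper 2-Segal if and only if for each n ≥ 2 there exists some i with 0 < i < n such that the square with top d_{i+1} : X_{n+1} → X_n, left d_0 : X_{n+1} → X_n, right d_0 : X_n → X_{n-1}, bottom d_i : X_n → X_{n-1} is a pullback. -/
/-!
If the upper 2-Segal square at level `n` with index `i` is a pullback, paste it to the right of
the level-`n+1` squares with indices `i` and `i + 1`. By the simplicial identities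
`d_{i+1} d_{i+1} = d_{i+1} d_{i+2}` and `d_i d_i = d_i d_{i+1}` both pastings give the same
composite square, so by the pasting lemma the two level-`n+1` squares are pullbacks together.
Hence once every square at level `n` is a pullback, one square at level `n + 1` forces all of
them, and induction on `n` concludes; at the bottom level only `i = 1` is allowed.
-/

open CategoryTheory Simplicial

universe u

/-- A commuting square of sets (top `f`, left `g`, right `h`, bottom `k`) is a pullback
if the canonical map to the fiber product is a bijection. -/
def IsPullbackSet {A B C D : Type u} (f : A → B) (g : A → C) (h : B → D) (k : C → D) : Prop :=
  (∀ a, h (f a) = k (g a)) ∧ ∀ (b : B) (c : C), h b = k c → ∃! a : A, f a = b ∧ g a = c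

/-- The upper 2-Segal condition: for every `n ≥ 2` (here `n = m + 2`) and every `0 < i < n`,
the square with top `d_{i+1} : X_{n+1} → X_n`, left `d_0 : X_{n+1} → X_n`,
right `d_0 : X_n → X_{n-1}`, bottom `d_i : X_n → X_{n-1}` is a pullback. -/
def UpperTwoSegal (X : SSet.{u}) : Prop :=
  ∀ (m i : ℕ), 0 < i → ∀ h2 : i < m + 2,
    IsPullbackSet
      (fun x => X.δ (⟨i + 1, by omega⟩ : Fin (m + 4)) x)
      (fun x => X.δ (0 : Fin (m + 4)) x)
      (fun x => X.δ (0 : Fin (m + 3)) x)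
      (fun x => X.δ (⟨i, by omega⟩ : Fin (m + 3)) x)

namespace IsPullbackSet

variable {A B C D E F : Type u} {f : A → B} {g : A → C} {h : B → D} {k : C → D}
  {f' : B → E} {h' : E → F} {k' : D → F}

theorem paste_horiz_iff (hcomm : ∀ a, h (f a) = k (g a)) (hR : IsPullbackSet f' h h' k') :
    IsPullbackSet f g h k ↔ IsPullbackSet (f' ∘ f) g h' (k' ∘ k) := by
  obtain ⟨hRcomm, hRuniq⟩ := hR
  constructor
  · rintro ⟨-, huniq⟩
    refine ⟨fun a => by simp only [Function.comp_apply, hRcomm, hcomm], fun e c hec => ?_⟩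
    obtain ⟨b, ⟨rfl, hb⟩, hb_uniq⟩ := hRuniq e (k c) hec
    obtain ⟨a, ⟨rfl, rfl⟩, ha_uniq⟩ := huniq b c hb
    refine ⟨a, ⟨rfl, rfl⟩, fun a' ⟨ha'1, ha'2⟩ => ha_uniq a' ⟨?_, ha'2⟩⟩
    exact hb_uniq (f a') ⟨ha'1, by rw [hcomm, ha'2]⟩
  · rintro ⟨-, huniq⟩
    refine ⟨hcomm, fun b c hbc => ?_⟩
    have hec : h' (f' b) = k' (k c) := by rw [hRcomm, hbc]
    obtain ⟨a, ⟨ha1, rfl⟩, ha_uniq⟩ := huniq (f' b) c hec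
    obtain ⟨b', -, hb'_uniq⟩ := hRuniq (f' b) (k (g a)) hec
    have hfa : f a = b := (hb'_uniq (f a) ⟨ha1, hcomm a⟩).trans (hb'_uniq b ⟨rfl, hbc⟩).symm
    refine ⟨a, ⟨hfa, rfl⟩, fun a' ⟨ha'1, ha'2⟩ => ha_uniq a' ⟨?_, ha'2⟩⟩
    simp only [Function.comp_apply, ha'1]

end IsPullbackSet

def UpperSquare (X : SSet.{u}) (m i : ℕ) (h : i < m + 2) : Prop :=
  IsPullbackSet
    (fun x => X.δ (⟨i + 1, by omega⟩ : Fin (m + 4)) x)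
    (fun x => X.δ (0 : Fin (m + 4)) x)
    (fun x => X.δ (0 : Fin (m + 3)) x)
    (fun x => X.δ (⟨i, by omega⟩ : Fin (m + 3)) x)

theorem upperSquare_comm (X : SSet.{u}) {m i : ℕ} (h : i < m + 2) (x : X _⦋m + 3⦌) :
    X.δ (0 : Fin (m + 3)) (X.δ (⟨i + 1, by omega⟩ : Fin (m + 4)) x) =
      X.δ (⟨i, by omega⟩ : Fin (m + 3)) (X.δ (0 : Fin (m + 4)) x) :=
  SSet.δ_comp_δ_apply (j := ⟨i, by omega⟩) (Fin.zero_le _) x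

theorem upperSquare_succ_iff (X : SSet.{u}) {k i : ℕ} (h : i + 1 < k + 3)
    (hR : UpperSquare X k i (by omega)) :
    UpperSquare X (k + 1) i (by omega) ↔ UpperSquare X (k + 1) (i + 1) h := by
  rw [UpperSquare, UpperSquare, IsPullbackSet.paste_horiz_iff (upperSquare_comm X (by omega)) hR,
    IsPullbackSet.paste_horiz_iff (upperSquare_comm X (by omega)) hR]
  refine iff_of_eq ?_
  congr 1 <;> funext x
  · exact SSet.δ_comp_δ_self_apply (i := ⟨i + 1, by omega⟩) x
  · exact SSet.δ_comp_δ_self_apply (i := ⟨i, by omega⟩) x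

theorem upperSquare_iff_of_le (X : SSet.{u}) {k i j : ℕ}
    (hk : ∀ i (_ : 0 < i) (h : i < k + 2), UpperSquare X k i h) (hi : 0 < i) (hij : i ≤ j)
    (hj : j < k + 3) :
    UpperSquare X (k + 1) i (by omega) ↔ UpperSquare X (k + 1) j hj := by
  induction j, hij using Nat.le_induction with
  | base => rfl
  | succ j hij ih =>
    exact (ih (by omega)).trans (upperSquare_succ_iff X hj (hk j (by omega) (by omega)))

theorem upperSquare_iff_of_forall (X : SSet.{u}) {k i j : ℕ}
    (hk : ∀ i (_ : 0 < i) (h : i < k + 2), UpperSquare X k i h) (hi : 0 < i) (hj : 0 < j)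
    (hi' : i < k + 3) (hj' : j < k + 3) :
    UpperSquare X (k + 1) i hi' ↔ UpperSquare X (k + 1) j hj' := by
  rcases le_total i j with hij | hji
  · exact upperSquare_iff_of_le X hk hi hij hj'
  · exact (upperSquare_iff_of_le X hk hj hji hi').symm

/-- A simplicial set is upper 2-Segal if and only if for each `n ≥ 2` (here `n = m + 2`)
there exists *some* `0 < i < n` for which the upper 2-Segal square is a pullback. -/
theorem upperTwoSegal_iff_exists (X : SSet.{u}) :
    UpperTwoSegal X ↔
      ∀ m : ℕ, ∃ (i : ℕ) (_ : 0 < i) (h2 : i < m + 2),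
        IsPullbackSet
          (fun x => X.δ (⟨i + 1, by omega⟩ : Fin (m + 4)) x)
          (fun x => X.δ (0 : Fin (m + 4)) x)
          (fun x => X.δ (0 : Fin (m + 3)) x)
          (fun x => X.δ (⟨i, by omega⟩ : Fin (m + 3)) x) := by
  refine ⟨fun h m => ⟨1, one_pos, by omega, h m 1 one_pos (by omega)⟩, fun hex m => ?_⟩
  induction m with
  | zero =>
    obtain ⟨i₀, hi₀, h₀, hsq⟩ := hex 0
    intro i hi h
    obtain rfl : i = i₀ := by omega
    exact hsq
  | succ k ih =>
    obtain ⟨i₀, hi₀, h₀, hsq⟩ := hex (k + 1)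
    intro i hi h
    exact (upperSquare_iff_of_forall X ih hi₀ hi h₀ h).mp hsq
end

section
/- If a simplicial set X is upper 2-Segal, then for every n > 0 and every 0 ≤ i ≤ n, the square with top s_{i+1} : X_{n+1} → X_{n+2}, left d_0 : X_{n+1} → X_n, right d_0 : X_{n+2} → X_{n+1}, bottom s_i : X_n → X_{n+1} is a pullback of sets. -/
open CategoryTheory Simplicial

universe u

/-!
Given `b ∈ X_{n+2}` and `c ∈ X_n` with `d_0 b = s_i c`, the only candidate is `a = d_{i+1} b`,
since `d_{i+1} s_{i+1} = id`, and `d_0 a = d_i d_0 b = d_i s_i c = c`. What needs the 2-Segal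
condition is `s_{i+1} d_{i+1} b = b`: the simplices `s_{i+1} b` and `s_{i+2} b` have the same
faces `d_{i+2}` (both are `b`) and `d_0` (`s_i s_i c = s_{i+1} s_i c`), so the upper 2-Segal
square identifies them, and applying `d_{i+1}` to both gives `b = s_{i+1} d_{i+1} b`.
-/

namespace IsPullbackSet

variable {A B C D : Type u} {f : A → B} {g : A → C} {h : B → D} {k : C → D}

theorem ext (H : IsPullbackSet f g h k) {a a' : A} (hf : f a = f a') (hg : g a = g a') :
    a = a' :=
  (H.2 (f a) (g a) (H.1 a)).unique ⟨rfl, rfl⟩ ⟨hf.symm, hg.symm⟩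

end IsPullbackSet

namespace SSet

variable {X : SSet.{u}} {n : ℕ}

theorem δ_zero_σ_mk_succ (j : ℕ) (hj : j < n + 1) (x : X _⦋n + 1⦌) :
    X.δ (0 : Fin (n + 3)) (X.σ (⟨j + 1, by omega⟩ : Fin (n + 2)) x) =
      X.σ (⟨j, hj⟩ : Fin (n + 1)) (X.δ (0 : Fin (n + 2)) x) :=
  δ_comp_σ_of_le_apply (i := 0) (j := ⟨j, hj⟩) (Fin.zero_le _) x

theorem δ_zero_δ_mk_succ (j : ℕ) (hj : j < n + 2) (x : X _⦋n + 2⦌) :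
    X.δ (0 : Fin (n + 2)) (X.δ (⟨j + 1, by omega⟩ : Fin (n + 3)) x) =
      X.δ (⟨j, hj⟩ : Fin (n + 2)) (X.δ (0 : Fin (n + 3)) x) :=
  δ_comp_δ_apply (i := 0) (j := ⟨j, hj⟩) (Fin.zero_le _) x

theorem δ_mk_σ_mk_self (j : ℕ) (hj : j < n + 1) (x : X _⦋n⦌) :
    X.δ (⟨j, by omega⟩ : Fin (n + 2)) (X.σ (⟨j, hj⟩ : Fin (n + 1)) x) = x :=
  δ_comp_σ_self_apply ⟨j, hj⟩ x

theorem δ_mk_succ_σ_mk (j : ℕ) (hj : j < n + 1) (x : X _⦋n⦌) :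
    X.δ (⟨j + 1, by omega⟩ : Fin (n + 2)) (X.σ (⟨j, hj⟩ : Fin (n + 1)) x) = x :=
  δ_comp_σ_succ_apply ⟨j, hj⟩ x

theorem δ_mk_σ_mk_succ (j : ℕ) (hj : j < n + 1) (x : X _⦋n + 1⦌) :
    X.δ (⟨j, by omega⟩ : Fin (n + 3)) (X.σ (⟨j + 1, by omega⟩ : Fin (n + 2)) x) =
      X.σ (⟨j, hj⟩ : Fin (n + 1)) (X.δ (⟨j, by omega⟩ : Fin (n + 2)) x) :=
  δ_comp_σ_of_le_apply (i := ⟨j, by omega⟩) (j := ⟨j, hj⟩) le_rfl x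

theorem σ_mk_σ_mk_self (j : ℕ) (hj : j < n + 1) (x : X _⦋n⦌) :
    X.σ (⟨j, by omega⟩ : Fin (n + 2)) (X.σ (⟨j, hj⟩ : Fin (n + 1)) x) =
      X.σ (⟨j + 1, by omega⟩ : Fin (n + 2)) (X.σ (⟨j, hj⟩ : Fin (n + 1)) x) :=
  σ_comp_σ_apply (i := ⟨j, hj⟩) (j := ⟨j, hj⟩) le_rfl x

end SSet

open SSet

theorem UpperTwoSegal.σ_δ_eq_self_of_δ_zero_eq_σ {X : SSet.{u}} (h : UpperTwoSegal X)
    {m i : ℕ} (hi : i < m + 2) {b : X _⦋m + 3⦌} {c : X _⦋m + 1⦌}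
    (hbc : X.δ (0 : Fin (m + 4)) b = X.σ (⟨i, by omega⟩ : Fin (m + 2)) c) :
    X.σ (⟨i + 1, by omega⟩ : Fin (m + 3)) (X.δ (⟨i + 1, by omega⟩ : Fin (m + 4)) b) = b := by
  have hσ : X.σ (⟨i + 1, by omega⟩ : Fin (m + 4)) b = X.σ (⟨i + 2, by omega⟩ : Fin (m + 4)) b := by
    refine (h (m + 1) (i + 1) (by omega) (by omega)).ext ?_ ?_
    · exact (δ_mk_succ_σ_mk (i + 1) _ b).trans (δ_mk_σ_mk_self (i + 2) _ b).symm
    · calc X.δ 0 (X.σ (⟨i + 1, by omega⟩ : Fin (m + 4)) b)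
          = X.σ (⟨i, by omega⟩ : Fin (m + 3)) (X.σ (⟨i, by omega⟩ : Fin (m + 2)) c) := by
            rw [δ_zero_σ_mk_succ i (by omega) b, hbc]
        _ = X.σ (⟨i + 1, by omega⟩ : Fin (m + 3)) (X.σ (⟨i, by omega⟩ : Fin (m + 2)) c) :=
            σ_mk_σ_mk_self i _ c
        _ = X.δ 0 (X.σ (⟨i + 2, by omega⟩ : Fin (m + 4)) b) := by
            rw [δ_zero_σ_mk_succ (i + 1) (by omega) b, hbc]
  calc X.σ (⟨i + 1, by omega⟩ : Fin (m + 3)) (X.δ (⟨i + 1, by omega⟩ : Fin (m + 4)) b)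
      = X.δ (⟨i + 1, by omega⟩ : Fin (m + 5)) (X.σ (⟨i + 2, by omega⟩ : Fin (m + 4)) b) :=
        (δ_mk_σ_mk_succ (i + 1) _ b).symm
    _ = b := by rw [← hσ, δ_mk_σ_mk_self]

/-- If `X` is upper 2-Segal, then for every `n > 0` (here `n = m + 1`) and every
`0 ≤ i ≤ n`, the square with top `s_{i+1} : X_{n+1} → X_{n+2}`, left `d_0 : X_{n+1} → X_n`,
right `d_0 : X_{n+2} → X_{n+1}`, bottom `s_i : X_n → X_{n+1}` is a pullback. -/
theorem upperTwoSegal_degeneracy_square (X : SSet.{u}) (h : UpperTwoSegal X)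
    (m i : ℕ) (hi : i ≤ m + 1) :
    IsPullbackSet
      (fun x => X.σ (⟨i + 1, by omega⟩ : Fin (m + 3)) x)
      (fun x => X.δ (0 : Fin (m + 3)) x)
      (fun x => X.δ (0 : Fin (m + 4)) x)
      (fun x => X.σ (⟨i, by omega⟩ : Fin (m + 2)) x) := by
  refine ⟨δ_zero_σ_mk_succ i (by omega), fun b c hbc => ?_⟩
  beta_reduce at hbc ⊢
  refine ⟨X.δ (⟨i + 1, by omega⟩ : Fin (m + 4)) b,
    ⟨h.σ_δ_eq_self_of_δ_zero_eq_σ (by omega) hbc, ?_⟩, ?_⟩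
  · rw [δ_zero_δ_mk_succ i (by omega) b, hbc, δ_mk_σ_mk_self]
  · rintro a ⟨rfl, -⟩
    exact (δ_mk_σ_mk_self (i + 1) _ a).symm
end

section
/- A simplicial set X is upper 2-Segal if and only if its upper décalage dec_⊤X is Segal. -/
open CategoryTheory Simplicial

universe u

/-- The Segal condition for the upper décalage `dec⊤ X` (which has `(dec⊤ X)_n = X_{n+1}`,
with `k`-th face `d_k : X_{n+1} → X_n` for `0 ≤ k ≤ n`), stated explicitly in terms of `X`:
for every `n ≥ 1` (here `n = m + 1`), the Segal square of `dec⊤ X` with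
top `d_0 : (dec⊤X)_{n+1} → (dec⊤X)_n`, left `d_{n+1}`, right `d_n`, bottom `d_0`
is the square with top `d_0 : X_{m+3} → X_{m+2}`, left `d_{m+2} : X_{m+3} → X_{m+2}`,
right `d_{m+1} : X_{m+2} → X_{m+1}`, bottom `d_0 : X_{m+2} → X_{m+1}`. -/
def UpperDecSegal (X : SSet.{u}) : Prop :=
  ∀ m : ℕ,
    IsPullbackSet
      (fun x => X.δ (0 : Fin (m + 4)) x)
      (fun x => X.δ (⟨m + 2, by omega⟩ : Fin (m + 4)) x)
      (fun x => X.δ (⟨m + 1, by omega⟩ : Fin (m + 3)) x)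
      (fun x => X.δ (0 : Fin (m + 3)) x)

/-
Write `(n, i)` for the square with top `d_{i+1} : X_{n+1} → X_n`, left and right `d_0`, and
bottom `d_i`. The Segal square of `dec⊤ X` in degree `n - 1` is the transpose of `(n, n - 1)`,
the upper 2-Segal square with the largest index. The others follow by induction on `n`: for
`0 < i < n`, the simplicial identities turn `(n + 1, i)` pasted with `(n, n - 1)` into
`(n + 1, n)` pasted with `(n, i)`, a composite of pullbacks, so `(n + 1, i)` is a pullback by
the pasting lemma.
-/

theorem isPullbackSet_iff_isPullback {A B C D : Type u} (f : A → B) (g : A → C) (h : B → D)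
    (k : C → D) : IsPullbackSet f g h k ↔ IsPullback (↾f) (↾g) (↾h) (↾k) := by
  have hw : (↾f ≫ ↾h = ↾g ≫ ↾k) ↔ ∀ a, h (f a) = k (g a) :=
    ⟨fun e a => ConcreteCategory.congr_hom e a, fun e => by ext a; exact e a⟩
  rw [Limits.Types.isPullback_iff, hw]
  refine and_congr_right fun comm => ⟨fun H => ⟨?_, fun b c hbc => (H b c hbc).exists⟩, ?_⟩
  · rintro a a' ⟨hf, hg⟩
    exact (H _ _ (comm a)).unique ⟨rfl, rfl⟩ ⟨hf.symm, hg.symm⟩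
  · rintro ⟨inj, surj⟩ b c hbc
    obtain ⟨a, ha⟩ := surj b c hbc
    exact ⟨a, ha, fun a' ha' => inj _ _ ⟨ha'.1.trans ha.1.symm, ha'.2.trans ha.2.symm⟩⟩

namespace SSet

variable (X : SSet.{u})

lemma δ_comp_δ_mk {n a b : ℕ} (hab : a ≤ b) (hb : b < n + 2) :
    X.δ (⟨b + 1, by omega⟩ : Fin (n + 3)) ≫ X.δ (⟨a, by omega⟩ : Fin (n + 2)) =
      X.δ (⟨a, by omega⟩ : Fin (n + 3)) ≫ X.δ (⟨b, hb⟩ : Fin (n + 2)) :=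
  X.δ_comp_δ (i := ⟨a, by omega⟩) (j := ⟨b, hb⟩) hab

theorem isPullback_δ_succ_δ_of_max
    (hX : ∀ m : ℕ, IsPullback (X.δ (⟨m + 2, by omega⟩ : Fin (m + 4))) (X.δ 0) (X.δ 0)
      (X.δ (⟨m + 1, by omega⟩ : Fin (m + 3))))
    (m i : ℕ) (hi : 0 < i) (him : i < m + 2) :
    IsPullback (X.δ (⟨i + 1, by omega⟩ : Fin (m + 4))) (X.δ 0) (X.δ 0)
      (X.δ (⟨i, by omega⟩ : Fin (m + 3))) := by
  induction m generalizing i with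
  | zero =>
    obtain rfl : i = 1 := by omega
    exact hX 0
  | succ k ih =>
    obtain rfl | hik := eq_or_lt_of_le (Nat.le_of_lt_succ him)
    · exact hX (k + 1)
    have outer := (hX (k + 1)).paste_horiz (ih i hi hik)
    rw [X.δ_comp_δ_mk (a := i + 1) (b := k + 2) (by omega) (by omega),
      X.δ_comp_δ_mk (a := i) (b := k + 1) (by omega) (by omega)] at outer
    exact outer.of_right (X.δ_comp_δ_mk (a := 0) (b := i) (by omega) (by omega)) (hX k)

lemma upperTwoSegal_iff : UpperTwoSegal X ↔ ∀ (m i : ℕ), 0 < i → ∀ him : i < m + 2,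
    IsPullback (X.δ (⟨i + 1, by omega⟩ : Fin (m + 4))) (X.δ 0) (X.δ 0)
      (X.δ (⟨i, by omega⟩ : Fin (m + 3))) :=
  forall₄_congr fun _ _ _ _ => isPullbackSet_iff_isPullback _ _ _ _

lemma upperDecSegal_iff : UpperDecSegal X ↔ ∀ m : ℕ,
    IsPullback (X.δ (⟨m + 2, by omega⟩ : Fin (m + 4))) (X.δ 0) (X.δ 0)
      (X.δ (⟨m + 1, by omega⟩ : Fin (m + 3))) :=
  forall_congr' fun _ => (isPullbackSet_iff_isPullback _ _ _ _).trans IsPullback.flip_iff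

end SSet

/-- A simplicial set `X` is upper 2-Segal if and only if its upper décalage `dec⊤ X`
is Segal. -/
theorem upperTwoSegal_iff_upperDec_segal (X : SSet.{u}) :
    UpperTwoSegal X ↔ UpperDecSegal X := by
  rw [X.upperTwoSegal_iff, X.upperDecSegal_iff]
  exact ⟨fun h m => h m (m + 1) (by omega) (by omega), X.isPullback_δ_succ_δ_of_max⟩
end
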